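/- arXiv:math/9606229 — 4 statements merged into one kernel-verified Lean document; each statement's English description precedes it below -/
import Mathlib

section
/- Let κ be an infinite cardinal, I a proper ideal on κ, δ a limit ordinal with cf(δ) > κ⁺, and ⟨f_α : α < δ⟩ a <_I-increasing sequence of functions from κ to the ordinals. Then the following are equivalent: (a) there are an unbounded set A ⊆ δ and sets s_α ∈ I for α ∈ A such that for each i < κ the values f_α(i), for α ∈ A with i ∉ s_α, are strictly increasing in α; (b) ⟨f_α : α < δ⟩ has a <_I-exact upper bound f with cf(f(i)) > κ for every i < κ and {i < κ : cf(f(i)) ≠ cf(δ)} ∈ I. -/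
/-!
(a) ⇒ (b). The ordinals `f α i` increase strictly along `Bᵢ = {α ∈ A : i ∉ s α}`, so where `Bᵢ`
is cofinal in `δ` their supremum has cofinality `cf δ`; this is `h i`. As `cf δ > κ`, the
coordinates where `Bᵢ` is bounded all lie in a single `s α`, so they form a null set, and off null
sets every `f α` is below `h` and every `g < h` is below some `f α`.

(b) ⇒ (a). For the `i` with `cf (h i) = cf δ` fix increasing cofinal sequences `⟨e i ζ : ζ < cf δ⟩`
in `h i`. As `cf δ > κ`, each `f α` lies below a single level `e · (Z α)` modulo `I`; by exactness
each level `e · ζ` lies below some `f (β ζ)` modulo `I`. Along the closure points `γ < cf δ` of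
`ζ ↦ Z (β ζ)`, unbounded because `cf δ` is regular and uncountable,
`f (β ζ) ≤ e (Z (β ζ)) < e γ < f (β γ)` outside null sets that depend on `ζ` and on `γ` separately.
-/

open Cardinal Set

noncomputable section

/-- The `β`-th iterated cardinal successor of `χ`. -/
noncomputable def succIter (χ : Cardinal.{0}) (β : Ordinal.{0}) : Cardinal :=
  Ordinal.limitRecOn β χ (fun _ ih => Order.succ ih)
    (fun β _ ih => ⨆ γ : Iio β, ih γ.1 γ.2)

/-- `J` is a proper ideal on `{i : i < κ}`. -/
structure IsIdealOn (κ : Ordinal.{0}) (J : Set (Set Ordinal)) : Prop where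
  subset_mem : ∀ s ∈ J, s ⊆ Iio κ
  empty_mem : ∅ ∈ J
  mono : ∀ s ∈ J, ∀ t ⊆ s, t ∈ J
  union_mem : ∀ s ∈ J, ∀ t ∈ J, s ∪ t ∈ J
  proper : Iio κ ∉ J

/-- The ideal of bounded subsets of `κ`. -/
def boundedIdeal (κ : Ordinal.{0}) : Set (Set Ordinal) := {s | ∃ j < κ, s ⊆ Iio j}

/-- `J` is `θ`-complete: closed under unions of fewer than `θ` of its members. -/
def IsCompleteIdeal (θ : Cardinal.{0}) (J : Set (Set Ordinal)) : Prop :=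
  ∀ S : Set (Set Ordinal), S ⊆ J → #S < Cardinal.lift.{1,0} θ → ⋃₀ S ∈ J

/-- `f <_J g` : `{i < κ : f i ≥ g i} ∈ J`. -/
def ltMod (κ : Ordinal.{0}) (J : Set (Set Ordinal)) (f g : Ordinal → Ordinal) : Prop :=
  {i | i < κ ∧ g i ≤ f i} ∈ J

/-- `h` is a `<_J`-exact upper bound of `⟨f α : α < δ⟩`. -/
def IsEub (κ : Ordinal.{0}) (J : Set (Set Ordinal)) (δ : Ordinal.{0})
    (f : Ordinal → Ordinal → Ordinal) (h : Ordinal → Ordinal) : Prop :=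
  (∀ α < δ, ltMod κ J (f α) h) ∧
    ∀ g : Ordinal → Ordinal, ltMod κ J g h → ∃ α < δ, ltMod κ J g (f α)

/-- `D` is an ultrafilter on `{i : i < κ}`. -/
structure IsUltrafilterOn (κ : Ordinal.{0}) (D : Set (Set Ordinal)) : Prop where
  subset_mem : ∀ s ∈ D, s ⊆ Iio κ
  inter_mem : ∀ s ∈ D, ∀ t ∈ D, s ∩ t ∈ D
  superset_mem : ∀ s ∈ D, ∀ t, t ⊆ Iio κ → s ⊆ t → t ∈ D
  empty_not_mem : ∅ ∉ D
  ultra : ∀ s, s ⊆ Iio κ → s ∈ D ∨ Iio κ \ s ∈ D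

/-- `f <_D g` : `{i < κ : f i < g i} ∈ D`. -/
def ltModD (κ : Ordinal.{0}) (D : Set (Set Ordinal)) (f g : Ordinal → Ordinal) : Prop :=
  {i | i < κ ∧ f i < g i} ∈ D

/-- `δ` is a good point for the sequence `f` (with respect to the ideal `J` on `κ`). -/
def IsGoodPt (κ : Ordinal.{0}) (J : Set (Set Ordinal)) (f : Ordinal → Ordinal → Ordinal)
    (δ : Ordinal.{0}) : Prop :=
  ∃ A : Set Ordinal, A ⊆ Iio δ ∧ (∀ β < δ, ∃ α ∈ A, β < α) ∧
    ∃ s : Ordinal → Set Ordinal, (∀ α ∈ A, s α ∈ J) ∧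
      ∀ i < κ, ∀ α ∈ A, ∀ β ∈ A, α < β → i ∉ s α → i ∉ s β → f α i < f β i

/-- `δ` is a weakly good point for `f`. -/
def IsWeaklyGoodPt (κ : Ordinal.{0}) (J : Set (Set Ordinal)) (f : Ordinal → Ordinal → Ordinal)
    (δ : Ordinal.{0}) : Prop :=
  ∃ t : Set Ordinal, t ⊆ Iio κ ∧ t ∉ J ∧
    ∃ A : Set Ordinal, A ⊆ Iio δ ∧ (∀ β < δ, ∃ α ∈ A, β < α) ∧
      ∃ s : Ordinal → Set Ordinal, (∀ α ∈ A, s α ∈ J) ∧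
        ∀ i ∈ t, ∀ α ∈ A, ∀ β ∈ A, α < β → i ∉ s α → i ∉ s β → f α i < f β i

/-- `δ` is a chaotic point for `f`. -/
def IsChaoticPt (κ : Ordinal.{0}) (J : Set (Set Ordinal)) (f : Ordinal → Ordinal → Ordinal)
    (δ : Ordinal.{0}) : Prop :=
  (∃ D : Set (Set Ordinal), IsUltrafilterOn κ D ∧ (∀ s ∈ J, s ∉ D) ∧
    ∃ a : Ordinal → Set Ordinal, (∀ i < κ, #(a i) ≤ Cardinal.lift.{1,0} κ.card) ∧
      ∀ α < δ, ∃ β, α < β ∧ β < δ ∧ ∃ g : Ordinal → Ordinal,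
        (∀ i < κ, g i ∈ a i) ∧ ltModD κ D (f α) g ∧ ltModD κ D g (f β)) ∨
  (∃ A : Set Ordinal, A ⊆ Iio δ ∧ (∀ β < δ, ∃ α ∈ A, β < α) ∧
    ∃ g : Ordinal → Ordinal, ∀ α ∈ A, ∀ β ∈ A, α < β →
      {i | i < κ ∧ f β i ≤ g i} \ {i | i < κ ∧ f α i ≤ g i} ∈ J ∧
      {i | i < κ ∧ f α i ≤ g i} \ {i | i < κ ∧ f β i ≤ g i} ∉ J)

/-- The set of good points `δ < λ⁺` with `κ < cf δ < λ`. -/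
def Sgd (κ lam : Cardinal.{0}) (J : Set (Set Ordinal)) (f : Ordinal → Ordinal → Ordinal) :
    Set Ordinal :=
  {δ | δ < (Order.succ lam).ord ∧ Order.IsSuccLimit δ ∧ κ < δ.cof ∧ δ.cof < lam ∧ IsGoodPt κ.ord J f δ}

/-- The set of bad points `δ < λ⁺` with `κ < cf δ < λ`. -/
def Sbd (κ lam : Cardinal.{0}) (J : Set (Set Ordinal)) (f : Ordinal → Ordinal → Ordinal) :
    Set Ordinal :=
  {δ | δ < (Order.succ lam).ord ∧ Order.IsSuccLimit δ ∧ κ < δ.cof ∧ δ.cof < lam ∧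
    (∃ h : Ordinal → Ordinal, IsEub κ.ord J δ f h ∧ {i | i < κ.ord ∧ (h i).cof ≤ κ} ∈ J) ∧
    ¬ IsGoodPt κ.ord J f δ}

/-- The set of chaotic points `δ < λ⁺` with `κ < cf δ < λ`. -/
def Sch (κ lam : Cardinal.{0}) (J : Set (Set Ordinal)) (f : Ordinal → Ordinal → Ordinal) :
    Set Ordinal :=
  {δ | δ < (Order.succ lam).ord ∧ Order.IsSuccLimit δ ∧ κ < δ.cof ∧ δ.cof < lam ∧ IsChaoticPt κ.ord J f δ}

/-- `C` is a club (closed unbounded) subset of `δ`. -/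
def IsClubIn (C : Set Ordinal) (δ : Ordinal.{0}) : Prop :=
  C ⊆ Iio δ ∧ (∀ α < δ, ∃ β ∈ C, α < β) ∧
    ∀ α < δ, 0 < α → (∀ β < α, ∃ γ ∈ C, β < γ ∧ γ < α) → α ∈ C

/-- `S` is stationary in `δ`. -/
def IsStationaryIn (S : Set Ordinal) (δ : Ordinal.{0}) : Prop :=
  ∀ C : Set Ordinal, IsClubIn C δ → (S ∩ C).Nonempty

/-- `(∏_{i<κ} θs i, <_J)` has true cofinality `σ`. -/
def HasTrueCofinality (κ : Ordinal.{0}) (J : Set (Set Ordinal)) (θs : Ordinal → Cardinal)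
    (σ : Cardinal.{0}) : Prop :=
  σ.IsRegular ∧ ∃ g : Ordinal → Ordinal → Ordinal,
    (∀ ξ < σ.ord, ∀ i < κ, g ξ i < (θs i).ord) ∧
    (∀ ξ < σ.ord, ∀ ξ' < σ.ord, ξ < ξ' → ltMod κ J (g ξ) (g ξ')) ∧
    ∀ h : Ordinal → Ordinal, (∀ i < κ, h i < (θs i).ord) → ∃ ξ < σ.ord, ltMod κ J h (g ξ)

/-- `S_{<θ}(X)` : the subsets of `X` of cardinality `< θ`. -/
def SetLt (θ : Cardinal.{0}) (X : Set Ordinal) : Set (Set Ordinal) :=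
  {a | a ⊆ X ∧ #a < Cardinal.lift.{1,0} θ}

/-- `C` is a club in `S_{<θ}(X)` : cofinal and closed under unions of increasing chains
of length `< θ`. -/
def IsClubInSetLt (θ : Cardinal.{0}) (X : Set Ordinal) (C : Set (Set Ordinal)) : Prop :=
  C ⊆ SetLt θ X ∧ (∀ a ∈ SetLt θ X, ∃ b ∈ C, a ⊆ b) ∧
    ∀ β : Ordinal, 0 < β → β < θ.ord → ∀ c : Ordinal → Set Ordinal,
      (∀ i < β, c i ∈ C) → (∀ i < β, ∀ j < β, i ≤ j → c i ⊆ c j) →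
      (⋃ i ∈ Iio β, c i) ∈ C

/-- `S` is stationary in `S_{<θ}(X)`. -/
def IsStationaryInSetLt (θ : Cardinal.{0}) (X : Set Ordinal) (S : Set (Set Ordinal)) : Prop :=
  ∀ C : Set (Set Ordinal), IsClubInSetLt θ X C → (S ∩ C).Nonempty

/-- `NPT(λ, θ)` : there is a family `⟨A i : i < λ⟩` of subsets of `λ`, each of cardinality
`≤ θ`, with no transversal, while every proper initial segment has a transversal. -/
def NPT (lam θ : Cardinal.{0}) : Prop :=
  ∃ A : Ordinal → Set Ordinal,
    (∀ i < lam.ord, A i ⊆ Iio lam.ord ∧ #(A i) ≤ Cardinal.lift.{1,0} θ) ∧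
    (¬ ∃ F : Ordinal → Ordinal, (∀ i < lam.ord, F i ∈ A i) ∧ InjOn F (Iio lam.ord)) ∧
    ∀ α < lam.ord, ∃ F : Ordinal → Ordinal, (∀ i < α, F i ∈ A i) ∧ InjOn F (Iio α)

end

open Ordinal

def IsCofinalBelow (B : Set Ordinal.{0}) (δ : Ordinal.{0}) : Prop :=
  ∀ β < δ, ∃ α ∈ B, β < α

theorem IsIdealOn.mem_of_subset_union {κ : Ordinal.{0}} {J : Set (Set Ordinal.{0})}
    (hJ : IsIdealOn κ J) {s t u : Set Ordinal} (hs : s ∈ J) (ht : t ∈ J) (hu : u ⊆ s ∪ t) :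
    u ∈ J :=
  hJ.mono _ (hJ.union_mem _ hs _ ht) _ hu

theorem ltMod_trans {κ : Ordinal.{0}} {J : Set (Set Ordinal.{0})} (hJ : IsIdealOn κ J)
    {f g k : Ordinal → Ordinal} (hfg : ltMod κ J f g) (hgk : ltMod κ J g k) : ltMod κ J f k :=
  hJ.mem_of_subset_union hfg hgk fun i ⟨hi, hki⟩ =>
    (le_or_gt (g i) (f i)).imp (fun h => ⟨hi, h⟩) fun h => ⟨hi, hki.trans h.le⟩

theorem exists_forall_lt_of_lt_cof {κ : Cardinal.{0}} {δ : Ordinal.{0}} (hκ : κ < δ.cof)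
    {A : Set Ordinal} (hA : IsCofinalBelow A δ) (γ : Ordinal → Ordinal)
    (hγ : ∀ i < κ.ord, γ i < δ) : ∃ α ∈ A, ∀ i < κ.ord, γ i < α := by
  have hsup : ⨆ i : Iio κ.ord, γ i < δ := by
    refine lift_iSup_lt_of_lt_cof ?_ fun i => hγ i i.2
    simpa [Cardinal.mk_Iio_ordinal, ← lift_cof] using hκ
  obtain ⟨α, hαA, hα⟩ := hA _ hsup
  exact ⟨α, hαA, fun i hi =>
    (le_ciSup Ordinal.bddAbove_of_small (⟨i, hi⟩ : Iio κ.ord)).trans_lt hα⟩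

theorem lt_iSup_of_strictMonoOn {δ : Ordinal.{0}} {B : Set Ordinal} (hBδ : B ⊆ Iio δ)
    (hB : IsCofinalBelow B δ) {g : Ordinal.{0} → Ordinal.{0}} (hg : StrictMonoOn g B)
    {α : Ordinal} (hα : α ∈ B) : g α < ⨆ α : B, g α := by
  have : Small.{0} B := small_subset hBδ
  obtain ⟨α', hα'B, hαα'⟩ := hB α (hBδ hα)
  exact (hg hα hα'B hαα').trans_le
    (le_ciSup (f := fun α : B => g α) Ordinal.bddAbove_of_small ⟨α', hα'B⟩)

theorem cof_iSup_eq_of_strictMonoOn {δ : Ordinal.{0}} {B : Set Ordinal} (hBδ : B ⊆ Iio δ)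
    (hB : IsCofinalBelow B δ) {g : Ordinal → Ordinal} (hg : StrictMonoOn g B) :
    (⨆ α : B, g α).cof = δ.cof := by
  have : Small.{0} B := small_subset hBδ
  have : NoMaxOrder B := ⟨fun α => by
    obtain ⟨α', hα'B, hα'⟩ := hB α (hBδ α.2)
    exact ⟨⟨α', hα'B⟩, hα'⟩⟩
  have hcof := lift_cof_iSup.{0, 1} (β := B) (f := fun α => g α) fun α α' h => hg α.2 α'.2 h
  have hBcof := Order.lift_cof_congr_of_strictMono.{1, 1} (f := Set.inclusion hBδ)
    (fun _ _ h => h) fun x => by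
      obtain ⟨α, hαB, hα⟩ := hB x x.2
      exact ⟨_, ⟨⟨α, hαB⟩, rfl⟩, hα.le⟩
  rw [Cardinal.lift_uzero, ← Cardinal.lift_id (Order.cof B), hBcof, Cardinal.lift_id, cof_Iio,
    ← lift_cof] at hcof
  exact Cardinal.lift_injective hcof

theorem exists_cofinal_strictMonoOn_Iio_cof_ord (x : Ordinal.{0}) :
    ∃ e : Ordinal → Ordinal, StrictMonoOn e (Iio x.cof.ord) ∧ (∀ ξ < x.cof.ord, e ξ < x) ∧
      ∀ y < x, ∃ ξ < x.cof.ord, y ≤ e ξ := by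
  obtain ⟨e, he⟩ := exists_isFundamentalSeq (a := x.cof.ord) (o := x) rfl
  refine ⟨fun ξ => if hξ : ξ < x.cof.ord then e ⟨ξ, hξ⟩ else 0, fun ξ hξ ζ hζ hξζ => ?_,
    fun ξ hξ => ?_, fun y hy => ?_⟩
  · simp only [dif_pos (show ξ < x.cof.ord from hξ), dif_pos (show ζ < x.cof.ord from hζ)]
    exact he.strictMono (show (⟨ξ, hξ⟩ : Iio x.cof.ord) < ⟨ζ, hζ⟩ from hξζ)
  · simp only [dif_pos hξ]
    exact (e ⟨ξ, hξ⟩).2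
  · obtain ⟨_, ⟨⟨ξ, hξ⟩, rfl⟩, hyξ⟩ := he.isCofinal_range ⟨y, hy⟩
    refine ⟨ξ, hξ, ?_⟩
    simp only [dif_pos (show ξ < x.cof.ord from hξ)]
    exact hyξ

theorem exists_gt_closed_under {μ : Cardinal.{0}} (hμ : μ.IsRegular) (hμ₀ : ℵ₀ < μ)
    (θ : Ordinal → Ordinal) (hθ : ∀ η < μ.ord, θ η < μ.ord) :
    ∀ a < μ.ord, ∃ γ, a < γ ∧ γ < μ.ord ∧ ∀ η < γ, θ η < γ := by
  intro a ha
  have hlim := Cardinal.isSuccLimit_ord hμ₀.le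
  let F : Ordinal → Ordinal := fun γ => max (Order.succ a) (⨆ η : Iio γ, Order.succ (θ η))
  have hF : ∀ γ < μ.ord, F γ < μ.ord := fun γ hγ => by
    refine max_lt (hlim.succ_lt ha) (lift_iSup_lt_of_lt_cof ?_ fun η => hlim.succ_lt ?_)
    · rw [Cardinal.mk_Iio_ordinal, Cardinal.lift_lift, ← lift_cof, hμ.cof_ord]
      exact Cardinal.lift_strictMono (Cardinal.lt_ord.1 hγ)
    · exact hθ η (η.2.trans hγ)
  refine ⟨nfp F a, ?_, nfp_lt_ord (hμ.cof_ord.symm ▸ hμ₀) hF ha, fun η hη => ?_⟩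
  · exact (Order.lt_succ a).trans_le ((le_max_left _ _).trans (iterate_le_nfp F a 1))
  · obtain ⟨n, hn⟩ := lt_nfp_iff.1 hη
    calc θ η < Order.succ (θ η) := Order.lt_succ _
      _ ≤ ⨆ ζ : Iio (F^[n] a), Order.succ (θ ζ) :=
        le_ciSup (f := fun ζ : Iio (F^[n] a) => Order.succ (θ ζ)) Ordinal.bddAbove_of_small ⟨η, hn⟩
      _ ≤ F (F^[n] a) := le_max_right _ _
      _ ≤ nfp F a := by
        rw [← Function.iterate_succ_apply' F n a]
        exact iterate_le_nfp F a _

section GoodToEub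

variable {κ : Cardinal.{0}} {J : Set (Set Ordinal.{0})} {δ : Ordinal.{0}} {A : Set Ordinal.{0}}
  {s : Ordinal.{0} → Set Ordinal.{0}} {f : Ordinal.{0} → Ordinal.{0} → Ordinal.{0}}
  {i : Ordinal.{0}}

/-- Where `A` keeps only boundedly many `α` with `i ∉ s α`, the value `cf δ` is just some ordinal
of the right cofinality. -/
noncomputable def goodSup (δ : Ordinal.{0}) (A : Set Ordinal.{0})
    (s : Ordinal.{0} → Set Ordinal.{0}) (f : Ordinal.{0} → Ordinal.{0} → Ordinal.{0})
    (i : Ordinal.{0}) : Ordinal.{0} :=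
  open Classical in
  if IsCofinalBelow {α ∈ A | i ∉ s α} δ then ⨆ α : {α ∈ A | i ∉ s α}, f α i else δ.cof.ord

theorem goodSup_of_isCofinalBelow (hi : IsCofinalBelow {α ∈ A | i ∉ s α} δ) :
    goodSup δ A s f i = ⨆ α : {α ∈ A | i ∉ s α}, f α i := by
  classical
  exact if_pos hi

theorem cof_goodSup (hAδ : A ⊆ Iio δ) (hmono : StrictMonoOn (f · i) {α ∈ A | i ∉ s α}) :
    (goodSup δ A s f i).cof = δ.cof := by
  classical
  by_cases hi : IsCofinalBelow {α ∈ A | i ∉ s α} δ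
  · rw [goodSup_of_isCofinalBelow hi]
    exact cof_iSup_eq_of_strictMonoOn (fun α hα => hAδ hα.1) hi hmono
  · rw [goodSup, if_neg hi]
    exact cof_ord_cof δ

theorem lt_goodSup (hAδ : A ⊆ Iio δ) (hmono : StrictMonoOn (f · i) {α ∈ A | i ∉ s α})
    (hi : IsCofinalBelow {α ∈ A | i ∉ s α} δ) {α : Ordinal} (hα : α ∈ A) (hαi : i ∉ s α) :
    f α i < goodSup δ A s f i := by
  rw [goodSup_of_isCofinalBelow hi]
  exact lt_iSup_of_strictMonoOn (fun α hα => hAδ hα.1) hi hmono ⟨hα, hαi⟩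

theorem exists_lt_of_lt_goodSup (hAδ : A ⊆ Iio δ) (hi : IsCofinalBelow {α ∈ A | i ∉ s α} δ)
    {x : Ordinal} (hx : x < goodSup δ A s f i) : ∃ α ∈ A, i ∉ s α ∧ x < f α i := by
  have : Small.{0} {α ∈ A | i ∉ s α} := small_subset fun α hα => hAδ hα.1
  rw [goodSup_of_isCofinalBelow hi] at hx
  obtain ⟨⟨α, hαA, hαi⟩, hxα⟩ := Ordinal.lt_iSup_iff.1 hx
  exact ⟨α, hαA, hαi, hxα⟩

theorem setOf_not_isCofinalBelow_mem (hJ : IsIdealOn κ.ord J) (hκ : κ < δ.cof)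
    (hA : IsCofinalBelow A δ) (hsJ : ∀ α ∈ A, s α ∈ J) :
    {i | i < κ.ord ∧ ¬ IsCofinalBelow {α ∈ A | i ∉ s α} δ} ∈ J := by
  have hbound : ∀ i, ∃ γ < δ, ¬ IsCofinalBelow {α ∈ A | i ∉ s α} δ →
      ∀ α ∈ A, i ∉ s α → α ≤ γ := fun i => by
    by_cases hi : IsCofinalBelow {α ∈ A | i ∉ s α} δ
    · exact ⟨0, cof_pos.1 (pos_of_gt hκ), fun h => absurd hi h⟩
    · simp only [IsCofinalBelow, not_forall, not_exists, not_and, not_lt] at hi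
      obtain ⟨γ, hγ, hle⟩ := hi
      exact ⟨γ, hγ, fun _ α hα hαi => hle α (show α ∈ {α ∈ A | i ∉ s α} from ⟨hα, hαi⟩)⟩
  choose γ hγδ hγ using hbound
  obtain ⟨α, hαA, hα⟩ := exists_forall_lt_of_lt_cof hκ hA γ fun i _ => hγδ i
  refine hJ.mono _ (hsJ α hαA) _ fun i ⟨hi, hiA⟩ => ?_
  by_contra hαi
  exact (hα i hi).not_ge (hγ i hiA α hαA hαi)

theorem isEub_goodSup (hJ : IsIdealOn κ.ord J) (hκ : κ < δ.cof)
    (hinc : ∀ α < δ, ∀ β < δ, α < β → ltMod κ.ord J (f α) (f β))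
    (hAδ : A ⊆ Iio δ) (hA : IsCofinalBelow A δ) (hsJ : ∀ α ∈ A, s α ∈ J)
    (hmono : ∀ i < κ.ord, StrictMonoOn (f · i) {α ∈ A | i ∉ s α}) :
    IsEub κ.ord J δ f (goodSup δ A s f) := by
  classical
  have hT := setOf_not_isCofinalBelow_mem hJ hκ hA hsJ
  refine ⟨fun α hα => ?_, fun g hg => ?_⟩
  · obtain ⟨α', hα'A, hαα'⟩ := hA α hα
    refine hJ.mem_of_subset_union (hJ.union_mem _ (hinc α hα α' (hAδ hα'A) hαα') _
      (hsJ α' hα'A)) hT fun i ⟨hi, hle⟩ => ?_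
    by_cases hiA : IsCofinalBelow {α ∈ A | i ∉ s α} δ
    · by_cases hα'i : i ∈ s α'
      · exact Or.inl (Or.inr hα'i)
      · exact Or.inl (Or.inl
          ⟨hi, ((lt_goodSup hAδ (hmono i hi) hiA hα'A hα'i).trans_le hle).le⟩)
    · exact Or.inr ⟨hi, hiA⟩
  · have hwit : ∀ i, ∃ α ∈ A, IsCofinalBelow {α ∈ A | i ∉ s α} δ →
        g i < goodSup δ A s f i → i ∉ s α ∧ g i < f α i := fun i => by
      by_cases hi : IsCofinalBelow {α ∈ A | i ∉ s α} δ ∧ g i < goodSup δ A s f i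
      · obtain ⟨α, hαA, hαi, hgα⟩ := exists_lt_of_lt_goodSup hAδ hi.1 hi.2
        exact ⟨α, hαA, fun _ _ => ⟨hαi, hgα⟩⟩
      · obtain ⟨α, hαA, -⟩ := hA 0 (cof_pos.1 (pos_of_gt hκ))
        exact ⟨α, hαA, fun hiA hgi => absurd ⟨hiA, hgi⟩ hi⟩
    choose w hwA hw using hwit
    obtain ⟨α, hαA, hα⟩ := exists_forall_lt_of_lt_cof hκ hA w fun i _ => hAδ (hwA i)
    refine ⟨α, hAδ hαA, hJ.mem_of_subset_union (hJ.union_mem _ hg _ (hsJ α hαA)) hT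
      fun i ⟨hi, hαg⟩ => ?_⟩
    by_cases hiA : IsCofinalBelow {α ∈ A | i ∉ s α} δ
    · by_cases hαi : i ∈ s α
      · exact Or.inl (Or.inr hαi)
      · refine Or.inl (Or.inl ⟨hi, not_lt.1 fun hgh => hαg.not_gt ?_⟩)
        obtain ⟨hwi, hgw⟩ := hw i hiA hgh
        exact hgw.trans (hmono i hi ⟨hwA i, hwi⟩ ⟨hαA, hαi⟩ (hα i hi))
    · exact Or.inr ⟨hi, hiA⟩

theorem exists_isEub_of_isGoodPt (hJ : IsIdealOn κ.ord J) (hκ : κ < δ.cof)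
    (hinc : ∀ α < δ, ∀ β < δ, α < β → ltMod κ.ord J (f α) (f β))
    (hgood : IsGoodPt κ.ord J f δ) :
    ∃ h : Ordinal → Ordinal, IsEub κ.ord J δ f h ∧ ∀ i < κ.ord, (h i).cof = δ.cof := by
  obtain ⟨A, hAδ, hA, s, hsJ, hchain⟩ := hgood
  have hmono : ∀ i < κ.ord, StrictMonoOn (f · i) {α ∈ A | i ∉ s α} :=
    fun i hi α hα β hβ hαβ => hchain i hi α hα.1 β hβ.1 hαβ hα.2 hβ.2
  exact ⟨goodSup δ A s f, isEub_goodSup hJ hκ hinc hAδ hA hsJ hmono,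
    fun i hi => cof_goodSup hAδ (hmono i hi)⟩

end GoodToEub

theorem IsEub.exists_ge_ltMod {κ : Ordinal.{0}} {J : Set (Set Ordinal.{0})} (hJ : IsIdealOn κ J)
    {δ : Ordinal.{0}} (hδ : Order.IsSuccLimit δ) {f : Ordinal → Ordinal → Ordinal}
    (hinc : ∀ α < δ, ∀ β < δ, α < β → ltMod κ J (f α) (f β)) {h : Ordinal → Ordinal}
    (heub : IsEub κ J δ f h) {g : Ordinal → Ordinal} (hg : ltMod κ J g h) {x : Ordinal}
    (hx : x < δ) : ∃ β < δ, x ≤ β ∧ ltMod κ J g (f β) := by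
  obtain ⟨α, hαδ, hα⟩ := heub.2 g hg
  have hβ := hδ.succ_lt (max_lt hαδ hx)
  exact ⟨_, hβ, (le_max_right _ _).trans (Order.le_succ _),
    ltMod_trans hJ hα (hinc α hαδ _ hβ ((le_max_left _ _).trans_lt (Order.lt_succ _)))⟩

theorem exists_forall_le_of_cofinal {κ μ : Cardinal.{0}} (hμ : μ.IsRegular) (hκμ : κ < μ)
    {S : Set Ordinal} {h : Ordinal → Ordinal} {e : Ordinal → Ordinal → Ordinal}
    (he : ∀ i ∈ S, MonotoneOn (e i) (Iio μ.ord) ∧ ∀ y < h i, ∃ ζ < μ.ord, y ≤ e i ζ)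
    (g : Ordinal → Ordinal) : ∃ ζ < μ.ord, ∀ i < κ.ord, i ∈ S → g i < h i → g i ≤ e i ζ := by
  classical
  have hlim := Cardinal.isSuccLimit_ord hμ.aleph0_le
  have hz : ∀ i, ∃ ζ < μ.ord, i ∈ S → g i < h i → g i ≤ e i ζ := fun i => by
    by_cases hi : i ∈ S ∧ g i < h i
    · obtain ⟨ζ, hζ, hle⟩ := (he i hi.1).2 _ hi.2
      exact ⟨ζ, hζ, fun _ _ => hle⟩
    · exact ⟨0, hlim.bot_lt, fun hiS hgi => absurd ⟨hiS, hgi⟩ hi⟩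
  choose z hzμ hz using hz
  obtain ⟨ζ, hζ, hzζ⟩ := exists_forall_lt_of_lt_cof (A := Iio μ.ord) (hμ.cof_ord ▸ hκμ)
    (fun ξ hξ => ⟨_, hlim.succ_lt hξ, Order.lt_succ ξ⟩) z fun i _ => hzμ i
  exact ⟨ζ, hζ, fun i hi hiS hgi =>
    (hz i hiS hgi).trans ((he i hiS).1 (hzμ i) hζ (hzζ i hi).le)⟩

theorem isGoodPt_of_strictMonoOn {κ : Ordinal.{0}} {J : Set (Set Ordinal.{0})}
    {f : Ordinal.{0} → Ordinal.{0} → Ordinal.{0}} {δ : Ordinal.{0}} {X : Set Ordinal.{0}}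
    {β : Ordinal.{0} → Ordinal.{0}} (hβ : StrictMonoOn β X) (hβδ : ∀ ζ ∈ X, β ζ < δ)
    (hcofinal : ∀ x < δ, ∃ ζ ∈ X, x < β ζ) (t : Ordinal.{0} → Set Ordinal.{0})
    (ht : ∀ ζ ∈ X, t ζ ∈ J)
    (hchain : ∀ i < κ, ∀ ζ ∈ X, ∀ ζ' ∈ X, ζ < ζ' → i ∉ t ζ → i ∉ t ζ' →
      f (β ζ) i < f (β ζ') i) :
    IsGoodPt κ J f δ := by
  have hinv := hβ.injOn.leftInvOn_invFunOn
  refine ⟨β '' X, ?_, fun x hx => ?_, fun α => t (Function.invFunOn β X α), ?_, ?_⟩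
  · rintro _ ⟨ζ, hζ, rfl⟩
    exact hβδ ζ hζ
  · obtain ⟨ζ, hζ, hxζ⟩ := hcofinal x hx
    exact ⟨β ζ, mem_image_of_mem β hζ, hxζ⟩
  · rintro _ ⟨ζ, hζ, rfl⟩
    simpa only [hinv hζ] using ht ζ hζ
  · rintro i hi _ ⟨ζ, hζ, rfl⟩ _ ⟨ζ', hζ', rfl⟩ hlt hs hs'
    simp only [hinv hζ, hinv hζ'] at hs hs'
    exact hchain i hi ζ hζ ζ' hζ' ((hβ.lt_iff_lt hζ hζ').1 hlt) hs hs'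

theorem isGoodPt_of_isEub {κ : Cardinal.{0}} (hκ : ℵ₀ ≤ κ) {J : Set (Set Ordinal.{0})}
    (hJ : IsIdealOn κ.ord J) {δ : Ordinal.{0}} (hδ : Order.IsSuccLimit δ) (hκδ : κ < δ.cof)
    {f : Ordinal → Ordinal → Ordinal}
    (hinc : ∀ α < δ, ∀ β < δ, α < β → ltMod κ.ord J (f α) (f β))
    {h : Ordinal → Ordinal} (heub : IsEub κ.ord J δ f h)
    (hne : {i | i < κ.ord ∧ (h i).cof ≠ δ.cof} ∈ J) :
    IsGoodPt κ.ord J f δ := by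
  set μ := δ.cof
  have hμ : μ.IsRegular := Cardinal.isRegular_cof hδ
  have hμ₀ : ℵ₀ < μ := hκ.trans_lt hκδ
  obtain ⟨d, hdmono, hdδ, hdcof⟩ := exists_cofinal_strictMonoOn_Iio_cof_ord δ
  have he : ∀ i, ∃ e : Ordinal → Ordinal, (h i).cof = μ → StrictMonoOn e (Iio μ.ord) ∧
      (∀ ζ < μ.ord, e ζ < h i) ∧ ∀ y < h i, ∃ ζ < μ.ord, y ≤ e ζ := fun i => by
    obtain ⟨e, he⟩ := exists_cofinal_strictMonoOn_Iio_cof_ord (h i)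
    exact ⟨e, fun hi => hi ▸ he⟩
  choose e he using he
  choose Z hZμ hZ using exists_forall_le_of_cofinal hμ hκδ (S := {i | (h i).cof = μ})
    fun i hi => ⟨(he i hi).1.monotoneOn, (he i hi).2.2⟩
  have hβ : ∀ ζ < μ.ord, ∃ β < δ, d ζ ≤ β ∧ ltMod κ.ord J (fun i => e i ζ) (f β) :=
    fun ζ hζ => heub.exists_ge_ltMod hJ hδ hinc
      (hJ.mono _ hne _ fun i ⟨hi, hle⟩ => ⟨hi, fun hc => hle.not_gt ((he i hc).2.1 ζ hζ)⟩)
      (hdδ ζ hζ)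
  choose! β hβδ hdβ hβ using hβ
  -- Closing under `ψ` too makes `β` increase along the closure points.
  have hψ : ∀ ζ < μ.ord, ∃ ξ < μ.ord, β ζ ≤ d ξ := fun ζ hζ => hdcof _ (hβδ ζ hζ)
  choose! ψ hψμ hψ using hψ
  have hclosed := exists_gt_closed_under hμ hμ₀ (fun ζ => max (Z (f (β ζ))) (ψ ζ))
    fun ζ hζ => max_lt (hZμ _) (hψμ ζ hζ)
  let X := {γ | γ < μ.ord ∧ ∀ η < γ, max (Z (f (β η))) (ψ η) < γ}
  refine isGoodPt_of_strictMonoOn (X := X) (β := β) (fun ζ hζ ζ' hζ' hlt => ?_)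
    (fun ζ hζ => hβδ ζ hζ.1) (fun x hx => ?_)
    (fun ζ => {i | i < κ.ord ∧ (h i).cof ≠ μ} ∪ {i | i < κ.ord ∧ h i ≤ f (β ζ) i} ∪
      {i | i < κ.ord ∧ f (β ζ) i ≤ e i ζ})
    (fun ζ hζ => hJ.union_mem _ (hJ.union_mem _ hne _ (heub.1 _ (hβδ ζ hζ.1))) _ (hβ ζ hζ.1))
    fun i hi ζ hζ ζ' hζ' hlt hs hs' => ?_
  · have hψζ : ψ ζ < ζ' := (le_max_right _ _).trans_lt (hζ'.2 ζ hlt)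
    exact (hψ ζ hζ.1).trans_lt ((hdmono (hψμ ζ hζ.1) hζ'.1 hψζ).trans_le (hdβ ζ' hζ'.1))
  · obtain ⟨ξ, hξ, hxξ⟩ := hdcof x hx
    obtain ⟨γ, hξγ, hγ, hγX⟩ := hclosed ξ hξ
    exact ⟨γ, ⟨hγ, hγX⟩, hxξ.trans_lt ((hdmono hξ hγ hξγ).trans_le (hdβ γ hγ))⟩
  · simp only [mem_union, mem_ofPred_eq, not_or, not_and, not_le, not_not] at hs hs'
    have hc : (h i).cof = μ := hs.1.1 hi
    have hZζ' : Z (f (β ζ)) < ζ' := (le_max_left _ _).trans_lt (hζ'.2 ζ hlt)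
    calc f (β ζ) i ≤ e i (Z (f (β ζ))) := hZ _ i hi hc (hs.1.2 hi)
      _ < e i ζ' := (he i hc).1 (hZμ _) hζ'.1 hZζ'
      _ < f (β ζ') i := hs'.2 hi

/-- Claim 1.6B: for a `<_I`-increasing sequence of length `δ` with `cf(δ) > κ⁺`,
goodness is equivalent to the existence of a `<_I`-exact upper bound `f` with
`cf(f(i)) > κ` for all `i < κ` and `{i < κ : cf(f(i)) ≠ cf(δ)} ∈ I`. -/
theorem statement4 (κ : Cardinal.{0}) (hκ : ℵ₀ ≤ κ)
    (I : Set (Set Ordinal.{0})) (hI : IsIdealOn κ.ord I)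
    (δ : Ordinal.{0}) (hδ : Order.IsSuccLimit δ) (hcof : Order.succ κ < δ.cof)
    (f : Ordinal.{0} → Ordinal.{0} → Ordinal.{0})
    (hinc : ∀ α < δ, ∀ β < δ, α < β → ltMod κ.ord I (f α) (f β)) :
    IsGoodPt κ.ord I f δ ↔
      ∃ h : Ordinal.{0} → Ordinal.{0}, IsEub κ.ord I δ f h ∧
        (∀ i < κ.ord, κ < (h i).cof) ∧
        {i | i < κ.ord ∧ (h i).cof ≠ δ.cof} ∈ I := by
  have hκδ : κ < δ.cof := (Order.lt_succ κ).trans hcof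
  refine ⟨fun hgood => ?_, fun ⟨h, heub, _, hne⟩ => isGoodPt_of_isEub hκ hI hδ hκδ hinc heub hne⟩
  obtain ⟨h, heub, hcof_h⟩ := exists_isEub_of_isGoodPt hI hκδ hinc hgood
  exact ⟨h, heub, fun i hi => (hcof_h i hi).symm ▸ hκδ,
    hI.mono _ hI.empty_mem _ fun i ⟨hi, hne⟩ => hne (hcof_h i hi)⟩
end

section
/- In the scale context, for every limit ordinal δ < μ with κ < cf(δ) < λ: δ ∈ S^gd ∪ S^bd if and only if ⟨f_α : α < δ⟩ has a <_J-exact upper bound f with {i < κ : cf(f(i)) ≤ κ} ∈ J. -/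
open Cardinal Set

/-! Let `A ⊆ δ` and `s α ∈ J` witness that `δ` is good, and put
`H i = sup {f α i | α ∈ A, i ∉ s α}`. The coordinates `i` at which the `α ∈ A` with `i ∉ s α`
are bounded in `δ` form a set in `J`: since `κ < cf δ`, all these bounds lie below one `σ < δ`,
and then that set is contained in `s α` for any `α ∈ A` above `σ`. At the remaining coordinates
the values `f α i` increase strictly along a cofinal subset of `δ`, so `H i` has cofinality
`cf δ > κ`, and `H` is an exact upper bound by the same uniform-bound argument. Bad points have
such a bound by definition. -/

universe u

def UnboundedBelow (B : Set Ordinal.{u}) (δ : Ordinal.{u}) : Prop :=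
  ∀ β < δ, ∃ α ∈ B, β < α

namespace Ordinal

theorem exists_bound_of_card_lt_cof {κ δ : Ordinal.{u}} (hκδ : κ.card < δ.cof)
    {Q : Ordinal.{u} → Prop} {P : Ordinal.{u} → Ordinal.{u} → Prop}
    (h : ∀ i < κ, Q i → ∃ β < δ, P i β) : ∃ σ < δ, ∀ i < κ, Q i → ∃ β ≤ σ, P i β := by
  have hδ : 0 < δ := cof_pos.mp (hκδ.trans_le' bot_le)
  have h' : ∀ i < κ, ∃ β < δ, Q i → P i β := fun i hi => by
    by_cases hQ : Q i
    · obtain ⟨β, hβδ, hP⟩ := h i hi hQ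
      exact ⟨β, hβδ, fun _ => hP⟩
    · exact ⟨0, hδ, (absurd · hQ)⟩
  choose b hbδ hb using h'
  let F : κ.ToType → Ordinal.{u} := fun x => b (ToType.mk.symm x) (ToType.mk.symm x).2
  refine ⟨⨆ x, F x, iSup_lt_of_lt_cof (by rwa [mk_toType]) fun x => hbδ _ _,
    fun i hi hQ => ⟨b i hi, ?_, hb i hi hQ⟩⟩
  simpa [F] using Ordinal.le_iSup F (ToType.mk ⟨i, hi⟩)

theorem cof_iSup_of_strictMonoOn {δ : Ordinal.{u}} {B : Set Ordinal.{u}} (hB : B ⊆ Iio δ)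
    (hBδ : UnboundedBelow B δ) {g : Ordinal.{u} → Ordinal.{u}} (hg : StrictMonoOn g B) :
    cof (⨆ α : B, g α) = cof δ := by
  have : Small.{u} B := small_subset hB
  have : NoMaxOrder B := ⟨fun α =>
    let ⟨β, hβ, hαβ⟩ := hBδ α (hB α.2); ⟨⟨β, hβ⟩, hαβ⟩⟩
  have hsup := lift_cof_iSup.{u, u + 1} (f := fun α : B => g α) fun α β h => hg α.2 β.2 h
  have hincl := Order.cof_congr_of_strictMono (f := inclusion hB)
    (fun _ _ h => h) fun β => by
      obtain ⟨α, hα, hβα⟩ := hBδ β β.2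
      exact ⟨_, mem_range_self ⟨α, hα⟩, hβα.le⟩
  rw [cof_Iio, ← lift_cof] at hincl
  rw [hincl, Cardinal.lift_lift] at hsup
  exact Cardinal.lift_inj.mp hsup

end Ordinal

namespace IsIdealOn

variable {κ : Ordinal.{0}} {J : Set (Set Ordinal)}

theorem mem_of_subset_union_s6 (hJ : IsIdealOn κ J) {s t u : Set Ordinal} (hs : s ∈ J) (ht : t ∈ J)
    (h : u ⊆ s ∪ t) : u ∈ J :=
  hJ.mono _ (hJ.union_mem s hs t ht) u h

theorem ltMod_trans (hJ : IsIdealOn κ J) {f g h : Ordinal → Ordinal} (hfg : ltMod κ J f g)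
    (hgh : ltMod κ J g h) : ltMod κ J f h :=
  hJ.mem_of_subset_union_s6 hfg hgh fun i ⟨hi, hhf⟩ =>
    (le_total (g i) (f i)).imp (fun hgf => ⟨hi, hgf⟩) fun hfg => ⟨hi, hhf.trans hfg⟩

end IsIdealOn

def supportAt (A : Set Ordinal.{u}) (s : Ordinal.{u} → Set Ordinal.{u}) (i : Ordinal.{u}) :
    Set Ordinal.{u} :=
  {α | α ∈ A ∧ i ∉ s α}

noncomputable def goodEub (f : Ordinal.{u} → Ordinal.{u} → Ordinal.{u}) (A : Set Ordinal.{u})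
    (s : Ordinal.{u} → Set Ordinal.{u}) (i : Ordinal.{u}) : Ordinal.{u} :=
  ⨆ α : supportAt A s i, f α i

section GoodEub

variable {κ δ : Ordinal.{0}} {J : Set (Set Ordinal.{0})}
  {f : Ordinal.{0} → Ordinal.{0} → Ordinal.{0}} {A : Set Ordinal.{0}}
  {s : Ordinal.{0} → Set Ordinal.{0}} {i : Ordinal.{0}}

theorem lt_goodEub (hA : A ⊆ Iio δ) (hi : UnboundedBelow (supportAt A s i) δ)
    (hmono : StrictMonoOn (f · i) (supportAt A s i)) {α : Ordinal} (hα : α ∈ supportAt A s i) :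
    f α i < goodEub f A s i := by
  have : Small.{0} (supportAt A s i) := small_subset fun β hβ => hA hβ.1
  obtain ⟨β, hβ, hαβ⟩ := hi α (hA hα.1)
  exact (hmono hα hβ hαβ).trans_le (Ordinal.le_iSup (fun β : supportAt A s i => f β i) ⟨β, hβ⟩)

theorem exists_lt_of_lt_goodEub {γ : Ordinal} (hγ : γ < goodEub f A s i) :
    ∃ α ∈ supportAt A s i, γ < f α i := by
  obtain ⟨⟨α, hα⟩, hγα⟩ := exists_lt_of_lt_ciSup' hγ
  exact ⟨α, hα, hγα⟩

theorem cof_goodEub (hA : A ⊆ Iio δ) (hi : UnboundedBelow (supportAt A s i) δ)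
    (hmono : StrictMonoOn (f · i) (supportAt A s i)) : (goodEub f A s i).cof = δ.cof :=
  Ordinal.cof_iSup_of_strictMonoOn (fun _ hα => hA hα.1) hi hmono

theorem setOf_bounded_supportAt_mem (hJ : IsIdealOn κ J) (hκδ : κ.card < δ.cof)
    (hAδ : UnboundedBelow A δ) (hsJ : ∀ α ∈ A, s α ∈ J) :
    {i | i < κ ∧ ¬ UnboundedBelow (supportAt A s i) δ} ∈ J := by
  have hbound : ∀ i < κ, ¬ UnboundedBelow (supportAt A s i) δ →
      ∃ β < δ, ∀ α ∈ A, β < α → i ∈ s α := by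
    intro i _ hi
    unfold UnboundedBelow at hi
    push Not at hi
    obtain ⟨β, hβδ, hβ⟩ := hi
    exact ⟨β, hβδ, fun α hαA hβα => by_contra fun hiα => (hβ α ⟨hαA, hiα⟩).not_gt hβα⟩
  obtain ⟨σ, hσδ, hσ⟩ := Ordinal.exists_bound_of_card_lt_cof hκδ hbound
  obtain ⟨α, hαA, hσα⟩ := hAδ σ hσδ
  refine hJ.mono _ (hsJ α hαA) _ fun i ⟨hiκ, hi⟩ => ?_
  obtain ⟨β, hβσ, hβ⟩ := hσ i hiκ hi
  exact hβ α hαA (hβσ.trans_lt hσα)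

theorem ltMod_goodEub (hJ : IsIdealOn κ J) (hA : A ⊆ Iio δ)
    (hmono : ∀ i < κ, StrictMonoOn (f · i) (supportAt A s i))
    (hbounded : {i | i < κ ∧ ¬ UnboundedBelow (supportAt A s i) δ} ∈ J) {α : Ordinal}
    (hα : α ∈ A) (hsα : s α ∈ J) : ltMod κ J (f α) (goodEub f A s) := by
  refine hJ.mem_of_subset_union_s6 hbounded hsα fun i ⟨hiκ, hle⟩ => ?_
  exact or_iff_not_imp_right.mpr fun hiα =>
    ⟨hiκ, fun hi => hle.not_gt (lt_goodEub hA hi (hmono i hiκ) ⟨hα, hiα⟩)⟩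

theorem exists_ltMod_of_ltMod_goodEub (hJ : IsIdealOn κ J) (hκδ : κ.card < δ.cof)
    (hA : A ⊆ Iio δ) (hAδ : UnboundedBelow A δ) (hsJ : ∀ α ∈ A, s α ∈ J)
    (hmono : ∀ i < κ, StrictMonoOn (f · i) (supportAt A s i)) {g : Ordinal → Ordinal}
    (hg : ltMod κ J g (goodEub f A s)) : ∃ η < δ, ltMod κ J g (f η) := by
  have hbound : ∀ i < κ, g i < goodEub f A s i →
      ∃ β < δ, β ∈ supportAt A s i ∧ g i < f β i := fun i _ hi =>
    let ⟨β, hβ, hgβ⟩ := exists_lt_of_lt_goodEub hi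
    ⟨β, hA hβ.1, hβ, hgβ⟩
  obtain ⟨σ, hσδ, hσ⟩ := Ordinal.exists_bound_of_card_lt_cof hκδ hbound
  obtain ⟨η, hηA, hση⟩ := hAδ σ hσδ
  refine ⟨η, hA hηA, hJ.mem_of_subset_union_s6 hg (hsJ η hηA) fun i ⟨hiκ, hle⟩ => ?_⟩
  refine or_iff_not_imp_right.mpr fun hiη => ⟨hiκ, not_lt.mp fun hgH => ?_⟩
  obtain ⟨β, hβσ, hβs, hgβ⟩ := hσ i hiκ hgH
  exact hle.not_gt (hgβ.trans (hmono i hiκ hβs ⟨hηA, hiη⟩ (hβσ.trans_lt hση)))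

theorem isEub_goodEub (hJ : IsIdealOn κ J) (hκδ : κ.card < δ.cof)
    (hinc : ∀ α < δ, ∀ β < δ, α < β → ltMod κ J (f α) (f β)) (hA : A ⊆ Iio δ)
    (hAδ : UnboundedBelow A δ) (hsJ : ∀ α ∈ A, s α ∈ J)
    (hmono : ∀ i < κ, StrictMonoOn (f · i) (supportAt A s i)) :
    IsEub κ J δ f (goodEub f A s) := by
  refine ⟨fun α hα => ?_, fun g => exists_ltMod_of_ltMod_goodEub hJ hκδ hA hAδ hsJ hmono⟩
  obtain ⟨β, hβA, hαβ⟩ := hAδ α hα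
  exact hJ.ltMod_trans (hinc α hα β (hA hβA) hαβ)
    (ltMod_goodEub hJ hA hmono (setOf_bounded_supportAt_mem hJ hκδ hAδ hsJ) hβA (hsJ β hβA))

theorem setOf_cof_goodEub_le_mem (hJ : IsIdealOn κ J) (hκδ : κ.card < δ.cof) (hA : A ⊆ Iio δ)
    (hmono : ∀ i < κ, StrictMonoOn (f · i) (supportAt A s i))
    (hbounded : {i | i < κ ∧ ¬ UnboundedBelow (supportAt A s i) δ} ∈ J) :
    {i | i < κ ∧ (goodEub f A s i).cof ≤ κ.card} ∈ J :=
  hJ.mono _ hbounded _ fun i ⟨hiκ, hcof⟩ => ⟨hiκ, fun hi =>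
    hcof.not_gt (cof_goodEub hA hi (hmono i hiκ) ▸ hκδ)⟩

theorem IsGoodPt.exists_isEub (hJ : IsIdealOn κ J) (hκδ : κ.card < δ.cof)
    (hinc : ∀ α < δ, ∀ β < δ, α < β → ltMod κ J (f α) (f β)) (hgood : IsGoodPt κ J f δ) :
    ∃ h, IsEub κ J δ f h ∧ {i | i < κ ∧ (h i).cof ≤ κ.card} ∈ J := by
  obtain ⟨A, hA, hAδ, s, hsJ, hmot⟩ := hgood
  have hmono : ∀ i < κ, StrictMonoOn (f · i) (supportAt A s i) :=
    fun i hi α hα β hβ hαβ => hmot i hi α hα.1 β hβ.1 hαβ hα.2 hβ.2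
  exact ⟨goodEub f A s, isEub_goodEub hJ hκδ hinc hA hAδ hsJ hmono,
    setOf_cof_goodEub_le_mem hJ hκδ hA hmono (setOf_bounded_supportAt_mem hJ hκδ hAδ hsJ)⟩

end GoodEub

theorem statement6_general
    (κ lam μ : Cardinal.{0}) (hμ : μ = Order.succ lam)
    (J : Set (Set Ordinal.{0})) (hJ : IsIdealOn κ.ord J)
    (f : Ordinal.{0} → Ordinal.{0} → Ordinal.{0})
    (hinc : ∀ α < μ.ord, ∀ β < μ.ord, α < β → ltMod κ.ord J (f α) (f β))
    (δ : Ordinal.{0}) (hδμ : δ < μ.ord) (hδ : Order.IsSuccLimit δ)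
    (h1 : κ < δ.cof) (h2 : δ.cof < lam) :
    δ ∈ Sgd κ lam J f ∪ Sbd κ lam J f ↔
      ∃ h : Ordinal.{0} → Ordinal.{0}, IsEub κ.ord J δ f h ∧
        {i | i < κ.ord ∧ (h i).cof ≤ κ} ∈ J := by
  subst hμ
  constructor
  · rintro (⟨-, -, -, -, hgood⟩ | ⟨-, -, -, -, heub, -⟩)
    · simpa using hgood.exists_isEub hJ (by simpa using h1)
        fun α hα β hβ => hinc α (hα.trans hδμ) β (hβ.trans hδμ)
    · exact heub
  · intro heub
    by_cases hgood : IsGoodPt κ.ord J f δ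
    · exact Or.inl ⟨hδμ, hδ, h1, h2, hgood⟩
    · exact Or.inr ⟨hδμ, hδ, h1, h2, heub, hgood⟩

/-- Fact 1.8(2): `δ ∈ Sgd ∪ Sbd` iff `⟨f_α : α < δ⟩` has a `<_J`-exact upper bound `h`
with `{i < κ : cf(h(i)) ≤ κ} ∈ J`. -/
theorem statement6
    (κ lam μ : Cardinal.{0}) (hκ : κ.IsRegular) (hκlam : κ < lam)
    (hcfl : lam.ord.cof = κ) (hμ : μ = Order.succ lam)
    (J : Set (Set Ordinal.{0})) (hJ : IsIdealOn κ.ord J) (hJbd : boundedIdeal κ.ord ⊆ J)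
    (lamSeq : Ordinal.{0} → Cardinal.{0})
    (hreg : ∀ i < κ.ord, (lamSeq i).IsRegular)
    (hgtκ : ∀ i < κ.ord, Order.succ κ < lamSeq i)
    (hmono : ∀ i < κ.ord, ∀ j < κ.ord, i < j → lamSeq i < lamSeq j)
    (hbelow : ∀ i < κ.ord, lamSeq i < lam)
    (hsupl : ∀ c < lam, ∃ i < κ.ord, c < lamSeq i)
    (f : Ordinal.{0} → Ordinal.{0} → Ordinal.{0})
    (hf : ∀ α < μ.ord, ∀ i < κ.ord, f α i < (lamSeq i).ord)
    (hinc : ∀ α < μ.ord, ∀ β < μ.ord, α < β → ltMod κ.ord J (f α) (f β))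
    (hcofinal : ∀ g : Ordinal.{0} → Ordinal.{0}, (∀ i < κ.ord, g i < (lamSeq i).ord) →
      ∃ α < μ.ord, ltMod κ.ord J g (f α))
    (δ : Ordinal.{0}) (hδμ : δ < μ.ord) (hδ : Order.IsSuccLimit δ)
    (h1 : κ < δ.cof) (h2 : δ.cof < lam) :
    δ ∈ Sgd κ lam J f ∪ Sbd κ lam J f ↔
      ∃ h : Ordinal.{0} → Ordinal.{0}, IsEub κ.ord J δ f h ∧
        {i | i < κ.ord ∧ (h i).cof ≤ κ} ∈ J :=
  statement6_general κ lam μ hμ J hJ f hinc δ hδμ hδ h1 h2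
end

section
/- In the scale context, if δ ∈ S^gd, then there is a club C of δ such that every α ∈ C with cf(α) > κ belongs to S^gd. -/
/-!
The set `A` witnessing that `δ` is good still witnesses goodness at every accumulation point
of `A`, and since `cf δ > κ ≥ ℵ₀` these accumulation points form a club of `δ`. The bound
`cf α < λ` for `α < λ⁺` holds because `λ` is singular.
-/

open Cardinal Set

open Filter

namespace Ordinal

theorem accPt_principal_iff {α : Ordinal} {A : Set Ordinal} :
    AccPt α (𝓟 A) ↔ 0 < α ∧ ∀ β < α, ∃ a ∈ A, β < a ∧ a < α := by
  simp [SuccOrder.accPt_principal, Set.Nonempty, pos_iff_ne_zero]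

theorem cof_lt_of_lt_ord_succ {lam : Cardinal} {α : Ordinal} (hα : α < (Order.succ lam).ord)
    (hlam : lam.ord.cof < lam) : α.cof < lam := by
  have hle : α.cof ≤ lam := (cof_le_card α).trans (Order.lt_succ_iff.1 (lt_ord.1 hα))
  refine hle.lt_of_ne fun h => hlam.ne ?_
  rw [← h, cof_ord_cof]

variable {A : Set Ordinal.{0}} {δ : Ordinal.{0}}

-- The sup of the `ω` iterates of "next element of `A`" stays below `δ` by `ℵ₀ < cf δ`.
theorem exists_accPt_between (hAδ : A ⊆ Iio δ) (hA : ∀ β < δ, ∃ a ∈ A, β < a)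
    (hδ : ℵ₀ < δ.cof) {β : Ordinal} (hβ : β < δ) : ∃ γ < δ, β < γ ∧ AccPt γ (𝓟 A) := by
  choose! next hnextA hnext using hA
  have hiter_lt : ∀ n, next^[n] β < δ := by
    intro n
    induction n with
    | zero => exact hβ
    | succ n ih => rw [Function.iterate_succ_apply']; exact hAδ (hnextA _ ih)
  have hiter_succ : ∀ n, next^[n] β < next^[n + 1] β := fun n => by
    rw [Function.iterate_succ_apply']; exact hnext _ (hiter_lt n)
  have hlt_nfp : ∀ n, next^[n] β < nfp next β := fun n =>
    (hiter_succ n).trans_le (iterate_le_nfp _ _ _)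
  refine ⟨nfp next β, nfp_lt_ord hδ (fun x hx => hAδ (hnextA x hx)) hβ, hlt_nfp 0,
    accPt_principal_iff.2 ⟨pos_of_gt (hlt_nfp 0), fun b hb => ?_⟩⟩
  obtain ⟨n, hn⟩ := lt_nfp_iff.1 hb
  refine ⟨next^[n + 1] β, ?_, hn.trans (hiter_succ n), hlt_nfp (n + 1)⟩
  rw [Function.iterate_succ_apply']
  exact hnextA _ (hiter_lt n)

theorem isClubIn_Iio_inter_derivedSet (hAδ : A ⊆ Iio δ) (hA : ∀ β < δ, ∃ a ∈ A, β < a)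
    (hδ : ℵ₀ < δ.cof) : IsClubIn (Iio δ ∩ derivedSet A) δ := by
  refine ⟨inter_subset_left, fun β hβ => ?_, fun α hαδ hα0 hα => ⟨hαδ, ?_⟩⟩
  · obtain ⟨γ, hγδ, hβγ, hγ⟩ := exists_accPt_between hAδ hA hδ hβ
    exact ⟨γ, ⟨hγδ, hγ⟩, hβγ⟩
  · have hαacc : AccPt α (𝓟 (derivedSet A)) := by
      refine accPt_principal_iff.2 ⟨hα0, fun β hβ => ?_⟩
      obtain ⟨γ, hγ, hβγ, hγα⟩ := hα β hβ
      exact ⟨γ, hγ.2, hβγ, hγα⟩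
    exact (isClosed_iff_derivedSet_subset _).1 (isClosed_derivedSet A) hαacc

end Ordinal

theorem isGoodPt_of_accPt {κ : Ordinal} {J : Set (Set Ordinal)} {f : Ordinal → Ordinal → Ordinal}
    {A : Set Ordinal} {s : Ordinal → Set Ordinal} {α : Ordinal} (hsJ : ∀ a ∈ A, s a ∈ J)
    (hinc : ∀ i < κ, ∀ a ∈ A, ∀ b ∈ A, a < b → i ∉ s a → i ∉ s b → f a i < f b i)
    (hα : AccPt α (𝓟 A)) : IsGoodPt κ J f α := by
  obtain ⟨-, hα⟩ := Ordinal.accPt_principal_iff.1 hα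
  refine ⟨A ∩ Iio α, inter_subset_right, fun β hβ => ?_, s, fun a ha => hsJ a ha.1,
    fun i hi a ha b hb => hinc i hi a ha.1 b hb.1⟩
  obtain ⟨a, ha, hβa, haα⟩ := hα β hβ
  exact ⟨a, ⟨ha, haα⟩, hβa⟩

theorem statement10_general
    (κ lam : Cardinal.{0}) (hκ : κ.IsRegular) (hκlam : κ < lam)
    (hcfl : lam.ord.cof = κ)
    (J : Set (Set Ordinal.{0}))
    (f : Ordinal.{0} → Ordinal.{0} → Ordinal.{0})
    (δ : Ordinal.{0}) (hδ : δ ∈ Sgd κ lam J f) :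
    ∃ C : Set Ordinal.{0}, IsClubIn C δ ∧
      ∀ α ∈ C, κ < α.cof → α ∈ Sgd κ lam J f := by
  obtain ⟨hδμ, -, hκδ, -, A, hAδ, hA, s, hsJ, hincA⟩ := hδ
  refine ⟨Iio δ ∩ derivedSet A,
    Ordinal.isClubIn_Iio_inter_derivedSet hAδ hA (hκ.aleph0_le.trans_lt hκδ), ?_⟩
  rintro α ⟨hαδ, hαA⟩ hκα
  have hαμ : α < (Order.succ lam).ord := hαδ.trans hδμ
  exact ⟨hαμ, hαA.isSuccLimit, hκα, Ordinal.cof_lt_of_lt_ord_succ hαμ (hcfl ▸ hκlam),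
    isGoodPt_of_accPt hsJ hincA hαA⟩

/-- Claim 1.10: if `δ` is a good point then there is a club `C` of `δ` all of whose
members of cofinality `> κ` are good points. -/
theorem statement10
    (κ lam μ : Cardinal.{0}) (hκ : κ.IsRegular) (hκlam : κ < lam)
    (hcfl : lam.ord.cof = κ) (hμ : μ = Order.succ lam)
    (J : Set (Set Ordinal.{0})) (hJ : IsIdealOn κ.ord J) (hJbd : boundedIdeal κ.ord ⊆ J)
    (lamSeq : Ordinal.{0} → Cardinal.{0})
    (hreg : ∀ i < κ.ord, (lamSeq i).IsRegular)
    (hgtκ : ∀ i < κ.ord, Order.succ κ < lamSeq i)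
    (hmono : ∀ i < κ.ord, ∀ j < κ.ord, i < j → lamSeq i < lamSeq j)
    (hbelow : ∀ i < κ.ord, lamSeq i < lam)
    (hsupl : ∀ c < lam, ∃ i < κ.ord, c < lamSeq i)
    (f : Ordinal.{0} → Ordinal.{0} → Ordinal.{0})
    (hf : ∀ α < μ.ord, ∀ i < κ.ord, f α i < (lamSeq i).ord)
    (hinc : ∀ α < μ.ord, ∀ β < μ.ord, α < β → ltMod κ.ord J (f α) (f β))
    (hcofinal : ∀ g : Ordinal.{0} → Ordinal.{0}, (∀ i < κ.ord, g i < (lamSeq i).ord) →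
      ∃ α < μ.ord, ltMod κ.ord J g (f α))
    (δ : Ordinal.{0}) (hδ : δ ∈ Sgd κ lam J f) :
    ∃ C : Set Ordinal.{0}, IsClubIn C δ ∧
      ∀ α ∈ C, κ < α.cof → α ∈ Sgd κ lam J f :=
  statement10_general κ lam hκ hκlam hcfl J f δ hδ
end

section
/- In the scale context, if δ ∈ S^ch, then there is a club C of δ such that every α ∈ C with cf(α) > κ belongs to S^ch. -/
open Cardinal Set

/-! Both clauses of chaoticity are witnessed by a choice `γ ↦ β > γ` along `δ`. Take the club
of `α < δ` such that above every `γ < α` some `γ' < α` has its chosen `β` below `α` as well.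
At such `α` the clauses restrict: in (b) the set `A ∩ α` is cofinal in `α`; in (a) the witness
`g` for `γ'` also serves for `γ`, since `f γ <_J f γ'` and `D` is disjoint from `J`. -/

-- Above `γ` rather than at `γ`: for singular `δ` the ordinals closed under the choice need
-- not be unbounded in `δ`.
theorem exists_isClubIn_forall_lt_exists_rel {δ : Ordinal.{0}} (hδ : ℵ₀ < δ.cof)
    {R : Ordinal → Ordinal → Prop} (hR : ∀ γ < δ, ∃ β, γ < β ∧ β < δ ∧ R γ β) :
    ∃ C, IsClubIn C δ ∧ ∀ α ∈ C, ∀ γ < α, ∃ γ' β, γ < γ' ∧ γ' < β ∧ β < α ∧ R γ' β := by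
  choose! next hlt hltδ hnext using hR
  refine ⟨{α | α < δ ∧ ∀ γ < α, ∃ γ', γ < γ' ∧ γ' < α ∧ next γ' < α}, ⟨fun α hα => hα.1, ?_, ?_⟩,
    fun α hα γ hγ => ?_⟩
  · intro β hβ
    have hβδ : β + 1 < δ := (Ordinal.one_lt_cof_iff.mp (one_lt_aleph0.trans hδ)).succ_lt hβ
    have hnfp : Ordinal.nfp next (β + 1) < δ := Ordinal.nfp_lt_ord hδ hltδ hβδ
    have hiter : ∀ n, next^[n] (β + 1) < next^[n + 1] (β + 1) := fun n => by
      rw [Function.iterate_succ_apply']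
      exact hlt _ ((Ordinal.iterate_le_nfp _ _ n).trans_lt hnfp)
    refine ⟨Ordinal.nfp next (β + 1), ⟨hnfp, fun γ hγ => ?_⟩,
      (Order.lt_succ β).trans_le (Ordinal.le_nfp next _)⟩
    obtain ⟨n, hn⟩ := Ordinal.lt_nfp_iff.mp hγ
    refine ⟨next^[n] (β + 1), hn, (hiter n).trans_le (Ordinal.iterate_le_nfp _ _ _), ?_⟩
    rw [← Function.iterate_succ_apply' next]
    exact (hiter (n + 1)).trans_le (Ordinal.iterate_le_nfp _ _ _)
  · intro α hα _ hcl
    refine ⟨hα, fun γ hγ => ?_⟩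
    obtain ⟨c, hc, hγc, hcα⟩ := hcl γ hγ
    obtain ⟨γ', hγγ', hγ'c, hnextc⟩ := hc.2 γ hγc
    exact ⟨γ', hγγ', hγ'c.trans hcα, hnextc.trans hcα⟩
  · obtain ⟨γ', hγγ', hγ'α, hnextα⟩ := hα.2 γ hγ
    exact ⟨γ', next γ', hγγ', hlt γ' (hγ'α.trans hα.1), hnextα, hnext γ' (hγ'α.trans hα.1)⟩

theorem cof_lt_of_lt_ord_succ {lam : Cardinal.{0}} (hlam : lam.ord.cof < lam) {α : Ordinal.{0}}
    (hα : α < (Order.succ lam).ord) : α.cof < lam := by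
  have hle : α.cof ≤ lam :=
    (Ordinal.cof_le_card α).trans (Order.lt_succ_iff.mp (Cardinal.lt_ord.mp hα))
  refine hle.lt_of_ne fun heq => hlam.ne ?_
  rw [← heq, Ordinal.cof_ord_cof]

theorem mem_Sch_of_isChaoticPt {κ lam : Cardinal.{0}} (hκ : ℵ₀ ≤ κ) (hlam : lam.ord.cof < lam)
    {J : Set (Set Ordinal)} {f : Ordinal → Ordinal → Ordinal} {α : Ordinal.{0}}
    (hα : α < (Order.succ lam).ord) (hακ : κ < α.cof) (hch : IsChaoticPt κ.ord J f α) :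
    α ∈ Sch κ lam J f :=
  ⟨hα, Ordinal.one_lt_cof_iff.mp (one_lt_aleph0.trans_le (hκ.trans hακ.le)), hακ,
    cof_lt_of_lt_ord_succ hlam hα, hch⟩

namespace IsUltrafilterOn

variable {κ : Ordinal.{0}} {D : Set (Set Ordinal)} {f g h : Ordinal → Ordinal}

theorem ltModD_trans (hD : IsUltrafilterOn κ D) (hfg : ltModD κ D f g) (hgh : ltModD κ D g h) :
    ltModD κ D f h :=
  hD.superset_mem _ (hD.inter_mem _ hfg _ hgh) _ (fun _ hi => hi.1)
    fun _ ⟨⟨hiκ, hfgi⟩, _, hghi⟩ => ⟨hiκ, hfgi.trans hghi⟩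

theorem ltModD_of_ltMod {J : Set (Set Ordinal)} (hD : IsUltrafilterOn κ D)
    (hDJ : ∀ s ∈ J, s ∉ D) (hfg : ltMod κ J f g) : ltModD κ D f g := by
  refine (hD.ultra _ fun _ hi => hi.1).resolve_right fun hcompl => hDJ _ hfg ?_
  convert hcompl using 1
  ext i
  simp +contextual

end IsUltrafilterOn

theorem statement11_general
    (κ lam μ : Cardinal.{0}) (hκ : κ.IsRegular) (hκlam : κ < lam)
    (hcfl : lam.ord.cof = κ) (hμ : μ = Order.succ lam)
    (J : Set (Set Ordinal.{0}))
    (f : Ordinal.{0} → Ordinal.{0} → Ordinal.{0})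
    (hinc : ∀ α < μ.ord, ∀ β < μ.ord, α < β → ltMod κ.ord J (f α) (f β))
    (δ : Ordinal.{0}) (hδ : δ ∈ Sch κ lam J f) :
    ∃ C : Set Ordinal.{0}, IsClubIn C δ ∧
      ∀ α ∈ C, κ < α.cof → α ∈ Sch κ lam J f := by
  subst hμ
  obtain ⟨hδμ, -, hδκ, -, hch⟩ := hδ
  have hδω : ℵ₀ < δ.cof := hκ.aleph0_le.trans_lt hδκ
  suffices ∃ C, IsClubIn C δ ∧ ∀ α ∈ C, IsChaoticPt κ.ord J f α by
    obtain ⟨C, hC, hCch⟩ := this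
    exact ⟨C, hC, fun α hα hακ => mem_Sch_of_isChaoticPt hκ.aleph0_le (hcfl ▸ hκlam)
      ((hC.1 hα).trans hδμ) hακ (hCch α hα)⟩
  rcases hch with ⟨D, hD, hDJ, a, ha, hwit⟩ | ⟨A, hAδ, hA, g, hAg⟩
  · obtain ⟨C, hC, hCwit⟩ := exists_isClubIn_forall_lt_exists_rel hδω hwit
    refine ⟨C, hC, fun α hα => Or.inl ⟨D, hD, hDJ, a, ha, fun γ hγ => ?_⟩⟩
    obtain ⟨γ', β, hγγ', hγ'β, hβα, g, hga, hγ'g, hgβ⟩ := hCwit α hα γ hγ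
    have hγ'μ : γ' < (Order.succ lam).ord := ((hγ'β.trans hβα).trans (hC.1 hα)).trans hδμ
    have hγγ'J := hinc γ (hγγ'.trans hγ'μ) γ' hγ'μ hγγ'
    exact ⟨β, hγγ'.trans hγ'β, hβα, g, hga, hD.ltModD_trans (hD.ltModD_of_ltMod hDJ hγγ'J) hγ'g,
      hgβ⟩
  · obtain ⟨C, hC, hCA⟩ := exists_isClubIn_forall_lt_exists_rel (R := fun _ β => β ∈ A) hδω
      fun γ hγ => let ⟨β, hβA, hγβ⟩ := hA γ hγ; ⟨β, hγβ, hAδ hβA, hβA⟩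
    refine ⟨C, hC, fun α hα => Or.inr ⟨A ∩ Iio α, fun _ hβ => hβ.2, fun γ hγ => ?_, g,
      fun β hβ β' hβ' => hAg β hβ.1 β' hβ'.1⟩⟩
    obtain ⟨γ', β, hγγ', hγ'β, hβα, hβA⟩ := hCA α hα γ hγ
    exact ⟨β, ⟨hβA, hβα⟩, hγγ'.trans hγ'β⟩

/-- Claim 1.11: if `δ` is a chaotic point then there is a club `C` of `δ` all of whose
members of cofinality `> κ` are chaotic points. -/
theorem statement11
    (κ lam μ : Cardinal.{0}) (hκ : κ.IsRegular) (hκlam : κ < lam)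
    (hcfl : lam.ord.cof = κ) (hμ : μ = Order.succ lam)
    (J : Set (Set Ordinal.{0})) (hJ : IsIdealOn κ.ord J) (hJbd : boundedIdeal κ.ord ⊆ J)
    (lamSeq : Ordinal.{0} → Cardinal.{0})
    (hreg : ∀ i < κ.ord, (lamSeq i).IsRegular)
    (hgtκ : ∀ i < κ.ord, Order.succ κ < lamSeq i)
    (hmono : ∀ i < κ.ord, ∀ j < κ.ord, i < j → lamSeq i < lamSeq j)
    (hbelow : ∀ i < κ.ord, lamSeq i < lam)
    (hsupl : ∀ c < lam, ∃ i < κ.ord, c < lamSeq i)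
    (f : Ordinal.{0} → Ordinal.{0} → Ordinal.{0})
    (hf : ∀ α < μ.ord, ∀ i < κ.ord, f α i < (lamSeq i).ord)
    (hinc : ∀ α < μ.ord, ∀ β < μ.ord, α < β → ltMod κ.ord J (f α) (f β))
    (hcofinal : ∀ g : Ordinal.{0} → Ordinal.{0}, (∀ i < κ.ord, g i < (lamSeq i).ord) →
      ∃ α < μ.ord, ltMod κ.ord J g (f α))
    (δ : Ordinal.{0}) (hδ : δ ∈ Sch κ lam J f) :
    ∃ C : Set Ordinal.{0}, IsClubIn C δ ∧
      ∀ α ∈ C, κ < α.cof → α ∈ Sch κ lam J f :=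
  statement11_general κ lam μ hκ hκlam hcfl hμ J f hinc δ hδ
end
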